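/- arXiv:1503.01615 — 3 statements merged into one kernel-verified Lean document; each statement's English description precedes it below -/
import Mathlib

section
/- Let φ : [t₀, ∞) → (1, ∞) satisfy φ(k̃ t) ≥ (k̃ φ(t))^{d̃} for t ≥ t₀ with k̃ > 1, d̃ > 1. Let p ∈ [n, n+1) for some n ∈ ℕ and set d = d̃^p, k = k̃^{2n+2}. Then φ(k t) ≥ (k φ(t))^{d} for all t ≥ t₀. -/
/-!
In logarithmic form the hypothesis says that `a m = log φ(kᵐ t)` satisfies
`a (m+1) ≥ d (log k + a m)`, so `a N ≥ (d + d² + ⋯ + d^N) log k + d^N a 0`. For `N = 2n+2`,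
pairing `d^(j+1)` with `d^(N-j)` by AM-GM gives `d + ⋯ + d^N ≥ N d^(n+1) ≥ N d^p`, and
`d^N ≥ d^p`; since `log k` and `a 0` are nonnegative this is the claim for `k^N` and `d^p`.
-/

open Real Finset

lemma two_mul_pow_le_pow_add_pow {x : ℝ} (hx : 1 ≤ x) {a b c : ℕ} (h : 2 * c ≤ a + b) :
    2 * x ^ c ≤ x ^ a + x ^ b := by
  have hx0 : 0 ≤ x := zero_le_one.trans hx
  have hprod : (x ^ c) ^ 2 ≤ x ^ a * x ^ b := by
    rw [← pow_mul, ← pow_add]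
    exact pow_le_pow_right₀ hx (by omega)
  nlinarith [sq_nonneg (x ^ a - x ^ b), pow_nonneg hx0 a, pow_nonneg hx0 b, pow_nonneg hx0 c]

lemma card_mul_pow_le_geom_sum {x : ℝ} (hx : 1 ≤ x) {N c : ℕ} (h : 2 * c + 1 ≤ N) :
    N * x ^ c ≤ ∑ j ∈ range N, x ^ j := by
  have hpairs : ∑ j ∈ range N, 2 * x ^ c ≤ ∑ j ∈ range N, (x ^ j + x ^ (N - 1 - j)) :=
    sum_le_sum fun j hj => two_mul_pow_le_pow_add_pow hx (by simp at hj; omega)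
  rw [sum_const, card_range, nsmul_eq_mul, sum_add_distrib,
    sum_range_reflect (fun j => x ^ j) N] at hpairs
  linarith

lemma mul_geom_sum_mul_add_pow_mul_le {a : ℕ → ℝ} {d L : ℝ} (hd : 0 ≤ d)
    (h : ∀ m, d * (L + a m) ≤ a (m + 1)) (m : ℕ) :
    d * (∑ j ∈ range m, d ^ j) * L + d ^ m * a 0 ≤ a m := by
  induction m with
  | zero => simp
  | succ m ih =>
    calc d * (∑ j ∈ range (m + 1), d ^ j) * L + d ^ (m + 1) * a 0
        = d * (L + (d * (∑ j ∈ range m, d ^ j) * L + d ^ m * a 0)) := by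
          rw [geom_sum_succ, pow_succ']; ring
      _ ≤ d * (L + a m) := by gcongr
      _ ≤ a (m + 1) := h m

theorem regularity_for_larger_exponent_general
    (φ : ℝ → ℝ) (t₀ k d : ℝ) (ht₀ : 0 < t₀) (hk : 1 < k) (hd : 1 < d)
    (hφ1 : ∀ t, t₀ ≤ t → 1 < φ t)
    (hreg : ∀ t, t₀ ≤ t → (k * φ t) ^ d ≤ φ (k * t))
    (p : ℝ) (n : ℕ) (hpn1 : p < n + 1) :
    ∀ t, t₀ ≤ t →
      (k ^ (2 * n + 2) * φ t) ^ (d ^ p) ≤ φ (k ^ (2 * n + 2) * t) := by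
  intro t ht
  have hφ0 : ∀ s, t₀ ≤ s → 0 < φ s := fun s hs => one_pos.trans (hφ1 s hs)
  have horbit : ∀ m : ℕ, t₀ ≤ k ^ m * t := fun m =>
    ht.trans (le_mul_of_one_le_left (ht₀.trans_le ht).le (one_le_pow₀ hk.le))
  have hstep : ∀ m : ℕ, d * (log k + log (φ (k ^ m * t))) ≤ log (φ (k ^ (m + 1) * t)) := by
    intro m
    have h := le_log_of_rpow_le (by positivity [hφ0 _ (horbit m)]) (hreg _ (horbit m))
    rwa [log_mul (by positivity) (hφ0 _ (horbit m)).ne', ← mul_assoc, ← pow_succ'] at h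
  have hiter := mul_geom_sum_mul_add_pow_mul_le (zero_le_one.trans hd.le) hstep (2 * n + 2)
  have hsum : ((2 * n + 2 : ℕ) : ℝ) * d ^ (n + 1) ≤ d * ∑ j ∈ range (2 * n + 2), d ^ j := by
    rw [pow_succ', mul_left_comm]
    exact mul_le_mul_of_nonneg_left (card_mul_pow_le_geom_sum hd.le (by omega)) (by positivity)
  have hexp : ∀ m : ℕ, n + 1 ≤ m → d ^ p ≤ d ^ m := fun m hm =>
    (rpow_le_rpow_of_exponent_le hd.le (hpn1.le.trans (by exact_mod_cast hm))).trans_eq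
      (rpow_natCast d m)
  rw [rpow_le_iff_le_log (by positivity [hφ0 t ht]) (hφ0 _ (horbit _)),
    log_mul (by positivity) (hφ0 t ht).ne', log_pow]
  simp only [pow_zero, one_mul] at hiter
  have hlogk := log_nonneg hk.le
  have hlogφ := log_nonneg (hφ1 t ht).le
  calc d ^ p * ((2 * n + 2 : ℕ) * log k + log (φ t))
      = (2 * n + 2 : ℕ) * d ^ p * log k + d ^ p * log (φ t) := by ring
    _ ≤ (2 * n + 2 : ℕ) * d ^ (n + 1) * log k + d ^ (2 * n + 2) * log (φ t) := by
      gcongr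
      · exact hexp _ le_rfl
      · exact hexp _ (by omega)
    _ ≤ d * (∑ j ∈ range (2 * n + 2), d ^ j) * log k + d ^ (2 * n + 2) * log (φ t) := by
      gcongr
    _ ≤ log (φ (k ^ (2 * n + 2) * t)) := hiter

/-- If the regularity inequality `φ(k̃ t) ≥ (k̃ φ(t))^d̃` holds for the exponent
`d̃`, then it holds for every exponent `d = d̃^p` with `p ∈ [n, n+1)`, with
`k = k̃^{2n+2}` in place of `k̃`. -/
theorem regularity_for_larger_exponent
    (φ : ℝ → ℝ) (t₀ k d : ℝ) (ht₀ : 0 < t₀) (hk : 1 < k) (hd : 1 < d)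
    (hφ1 : ∀ t, t₀ ≤ t → 1 < φ t)
    (hreg : ∀ t, t₀ ≤ t → (k * φ t) ^ d ≤ φ (k * t))
    (p : ℝ) (n : ℕ) (hpn : (n : ℝ) ≤ p) (hpn1 : p < n + 1) :
    ∀ t, t₀ ≤ t →
      (k ^ (2 * n + 2) * φ t) ^ (d ^ p) ≤ φ (k ^ (2 * n + 2) * t) :=
  regularity_for_larger_exponent_general φ t₀ k d ht₀ hk hd hφ1 hreg p n hpn1
end

section
/- Let 1 < c̃ < c and let M, μ : [R₀, ∞) → [R₀, ∞) be increasing with M(r) ≥ exp((log r)^c) and μ(r) ≤ exp((log r)^{c̃}) for all r > R₀, where log R₀ > 1. Then for every m ∈ ℕ there exists N ∈ ℕ such that for all n > N and all r > R₀: μ^{n+m}(r) < M^n(r), where superscripts denote iteration. -/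
/-!
Write `φ_c r = exp ((log r) ^ c)` (`expLogRpow c r`). Where `log r ≥ 0` its iterates are explicit,
`φ_c^[n] = φ_{cⁿ}`, and a monotone map below (above) `φ_c` has iterates below (above) those of
`φ_c`. Hence `μ^[n+m] r ≤ φ_{c̃^(n+m)} r` and `φ_{cⁿ} r ≤ M^[n] r`; as `c̃ < c`, eventually
`c̃^(n+m) < cⁿ`, which is a strict inequality between two powers of `log r > 1`.
-/
open Real Set Function

theorem MonotoneOn.iterate_le_of_le {α : Type*} [Preorder α] {f g : α → α} {s : Set α}
    (hf : MonotoneOn f s) (hfs : MapsTo f s s) (hgs : MapsTo g s s)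
    (hfg : ∀ x ∈ s, f x ≤ g x) (n : ℕ) {x : α} (hx : x ∈ s) : f^[n] x ≤ g^[n] x := by
  induction n with
  | zero => exact le_rfl
  | succ n ih =>
    rw [iterate_succ_apply', iterate_succ_apply']
    exact (hf (hfs.iterate n hx) (hgs.iterate n hx) ih).trans (hfg _ (hgs.iterate n hx))

theorem exists_pow_add_lt_pow {a b : ℝ} (ha : 0 < a) (hab : a < b) (m : ℕ) :
    ∃ N : ℕ, ∀ n, N < n → a ^ (n + m) < b ^ n := by
  have hba : 1 < b / a := (one_lt_div ha).mpr hab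
  obtain ⟨N, hN⟩ := pow_unbounded_of_one_lt (a ^ m) hba
  refine ⟨N, fun n hn => ?_⟩
  have hm : a ^ m < (b / a) ^ n := hN.trans_le (pow_le_pow_right₀ hba.le hn.le)
  calc a ^ (n + m) = a ^ n * a ^ m := pow_add _ _ _
    _ < a ^ n * (b / a) ^ n := mul_lt_mul_of_pos_left hm (pow_pos ha n)
    _ = b ^ n := by rw [← mul_pow, mul_div_cancel₀ _ ha.ne']

noncomputable def expLogRpow (c r : ℝ) : ℝ := exp (log r ^ c)

theorem self_le_expLogRpow {c r : ℝ} (hc : 1 ≤ c) (hr : 0 < r) (hlog : 1 ≤ log r) :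
    r ≤ expLogRpow c r :=
  calc r = exp (log r) := (exp_log hr).symm
    _ ≤ expLogRpow c r := exp_le_exp.mpr (self_le_rpow_of_one_le hlog hc)

theorem expLogRpow_monotoneOn {c : ℝ} (hc : 0 ≤ c) : MonotoneOn (expLogRpow c) (Ici 1) :=
  fun _ hx _ _ hxy => exp_le_exp.mpr <|
    rpow_le_rpow (log_nonneg hx) (log_le_log (zero_lt_one.trans_le hx) hxy) hc

theorem expLogRpow_lt_expLogRpow {a b r : ℝ} (hr : 1 < log r) (hab : a < b) :
    expLogRpow a r < expLogRpow b r :=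
  exp_lt_exp.mpr (rpow_lt_rpow_of_exponent_lt hr hab)

theorem iterate_expLogRpow (c : ℝ) {r : ℝ} (hr : 1 ≤ r) (n : ℕ) :
    (expLogRpow c)^[n] r = expLogRpow (c ^ n) r := by
  induction n with
  | zero => simp [expLogRpow, exp_log (zero_lt_one.trans_le hr)]
  | succ n ih =>
    rw [iterate_succ_apply', ih]
    simp only [expLogRpow, log_exp, pow_succ, rpow_mul (log_nonneg hr)]

/-- For `1 < r < e` we have `expLogRpow c r < r`. -/
theorem one_le_of_forall_le_expLogRpow {c R₀ : ℝ} (hc : 1 < c)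
    (h : ∀ r, R₀ < r → r ≤ expLogRpow c r) : 1 ≤ R₀ := by
  by_contra! hR₀
  have hr : R₀ < exp 2⁻¹ := hR₀.trans (one_lt_exp_iff.mpr (by norm_num))
  have hlt : expLogRpow c (exp 2⁻¹) < exp 2⁻¹ := by
    rw [expLogRpow, log_exp, exp_lt_exp]
    simpa using rpow_lt_rpow_of_exponent_gt (by norm_num : (0 : ℝ) < 2⁻¹) (by norm_num) hc
  exact (h _ hr).not_gt hlt

theorem iterates_growth_comparison_general
    (M μ : ℝ → ℝ) (R₀ c c' : ℝ) (hR₀ : 1 < Real.log R₀)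
    (hc' : 1 < c') (hcc' : c' < c)
    (hμmono : MonotoneOn μ (Set.Ici R₀))
    (hμr : ∀ r, R₀ ≤ r → r ≤ μ r)
    (hM : ∀ r, R₀ < r → Real.exp ((Real.log r) ^ c) ≤ M r)
    (hμ : ∀ r, R₀ < r → μ r ≤ Real.exp ((Real.log r) ^ c')) :
    ∀ m : ℕ, ∃ N : ℕ, ∀ n : ℕ, N < n → ∀ r, R₀ < r →
      μ^[n + m] r < M^[n] r := by
  intro m
  have hc : 1 < c := hc'.trans hcc'
  have hR₀one : 1 ≤ R₀ :=
    one_le_of_forall_le_expLogRpow hc' fun r hr => (hμr r hr.le).trans (hμ r hr)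
  have hs : Ioi R₀ ⊆ Ici 1 := Ioi_subset_Ici_self.trans (Ici_subset_Ici.mpr hR₀one)
  have hlog : ∀ r ∈ Ioi R₀, 1 < log r :=
    fun r hr => hR₀.trans (log_lt_log (zero_lt_one.trans_le hR₀one) hr)
  have hmaps : ∀ e, 1 ≤ e → MapsTo (expLogRpow e) (Ioi R₀) (Ioi R₀) := fun e he r hr =>
    hr.trans_le <| self_le_expLogRpow he (zero_lt_one.trans_le (hs hr)) (hlog r hr).le
  have hμmaps : MapsTo μ (Ioi R₀) (Ioi R₀) := fun r hr => hr.trans_le (hμr r hr.le)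
  have hMmaps : MapsTo M (Ioi R₀) (Ioi R₀) := fun r hr => (hmaps c hc.le hr).trans_le (hM r hr)
  obtain ⟨N, hN⟩ := exists_pow_add_lt_pow (zero_lt_one.trans hc') hcc' m
  refine ⟨N, fun n hn r hr => ?_⟩
  calc μ^[n + m] r ≤ (expLogRpow c')^[n + m] r :=
        (hμmono.mono Ioi_subset_Ici_self).iterate_le_of_le hμmaps (hmaps c' hc'.le) hμ _ hr
    _ = expLogRpow (c' ^ (n + m)) r := iterate_expLogRpow c' (hs hr) _
    _ < expLogRpow (c ^ n) r := expLogRpow_lt_expLogRpow (hlog r hr) (hN n hn)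
    _ = (expLogRpow c)^[n] r := (iterate_expLogRpow c (hs hr) n).symm
    _ ≤ M^[n] r :=
        ((expLogRpow_monotoneOn (zero_le_one.trans hc.le)).mono hs).iterate_le_of_le
          (hmaps c hc.le) hMmaps hM n hr

/-- Growth comparison from Example 2: if `M(r) ≥ exp((log r)^c)` and
`μ(r) ≤ exp((log r)^c̃)` with `1 < c̃ < c`, then for each `m` there is `N` so that
`μ^{n+m}(r) < Mⁿ(r)` for all `n > N` and `r > R₀`. -/
theorem iterates_growth_comparison
    (M μ : ℝ → ℝ) (R₀ c c' : ℝ) (hR₀ : 1 < Real.log R₀)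
    (hc' : 1 < c') (hcc' : c' < c)
    (hMmono : MonotoneOn M (Set.Ici R₀)) (hμmono : MonotoneOn μ (Set.Ici R₀))
    (hMmap : ∀ r, R₀ ≤ r → R₀ ≤ M r) (hμmap : ∀ r, R₀ ≤ r → R₀ ≤ μ r)
    (hμr : ∀ r, R₀ ≤ r → r ≤ μ r)
    (hM : ∀ r, R₀ < r → Real.exp ((Real.log r) ^ c) ≤ M r)
    (hμ : ∀ r, R₀ < r → μ r ≤ Real.exp ((Real.log r) ^ c')) :
    ∀ m : ℕ, ∃ N : ℕ, ∀ n : ℕ, N < n → ∀ r, R₀ < r →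
      μ^[n + m] r < M^[n] r :=
  iterates_growth_comparison_general M μ R₀ c c' hR₀ hc' hcc' hμmono hμr hM hμ
end

section
/- Let M : ℝ → ℝ (representing r ↦ M(r, f₂)) satisfy log M(r^c) ≥ c log M(r) for all r ≥ R₀ and c > 1 (with M(r) > 1), and let L : ℝ → ℝ (representing r ↦ M(r, f₁)) be increasing and satisfy (log L(r^k))^ε ≥ k log L(r) for r ≥ R, with ε = (2/3)ε′, ν = k^{1/2}, k′ = k^{3/2}. Assume the composition bound N(ν s) ≥ L(M(s)) ≥ N(s) for s ≥ R₂, where N(r) represents M(r, f₁∘f₂). Then there exists R′ such that (log N(r^{k′}))^{ε′} ≥ k′ log N(r) for all r ≥ R′ (assuming log N(r) ≥ 1 for r ≥ R′). -/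
/-!
Since `log M(r^c) ≥ c log M(r)`, the function `M` satisfies `M(r)^k ≤ M(s)` whenever `r^k ≤ s`.
Taking `s = r^{k′}/ν`, which is eventually `≥ r^k` because `k′ > k`, the composition bounds give
`N(r^{k′}) ≥ L(M(s)) ≥ L(M(r)^k)` and `N(r) ≤ L(M(r))`. Strong log-regularity of `L` at `M(r)`
then yields `k log N(r) ≤ (log N(r^{k′}))^ε` with `ε = 2ε′/3`, and raising to the power `3/2`
turns `k` into `k′` at the cost of replacing `log N(r)` by `(log N(r))^{3/2} ≥ log N(r)`.

Since `Real.log x = log |x|`, the chain of logarithms also needs `N(r) > 0` for large `r`; this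
holds because `L` cannot stay below `-e`, so `N(r) ≥ L(M(r/ν)) > -e` together with `log N(r) ≥ 1`
forces `N(r) ≥ e`.
-/

open Real Filter

theorem exp_one_le_of_one_le_log {x : ℝ} (h : 1 ≤ log x) (hx : -exp 1 < x) : exp 1 ≤ x := by
  have hx0 : x ≠ 0 := by rintro rfl; norm_num at h
  rw [← log_abs, le_log_iff_exp_le (abs_pos.2 hx0)] at h
  rcases le_abs'.1 h with h | h <;> linarith

theorem rpow_mul_le_rpow_of_mul_le_rpow {k a b p q : ℝ} (hk : 0 ≤ k) (ha : 1 ≤ a) (hb : 0 ≤ b)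
    (hp : 1 ≤ p) (h : k * a ≤ b ^ q) : k ^ p * a ≤ b ^ (q * p) :=
  calc k ^ p * a ≤ k ^ p * a ^ p := by gcongr; exact self_le_rpow_of_one_le ha hp
    _ = (k * a) ^ p := (mul_rpow hk (by linarith)).symm
    _ ≤ (b ^ q) ^ p := by gcongr
    _ = b ^ (q * p) := (rpow_mul hb q p).symm

theorem eventually_mul_rpow_le_rpow {k k' : ℝ} (h : k < k') (C : ℝ) :
    ∀ᶠ r in atTop, C * r ^ k ≤ r ^ k' := by
  filter_upwards [(tendsto_rpow_atTop (sub_pos.2 h)).eventually_ge_atTop C,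
    eventually_gt_atTop 0] with r hC hr
  rw [← sub_add_cancel k' k, rpow_add hr]
  exact mul_le_mul_of_nonneg_right hC (rpow_nonneg hr.le _)

theorem rpow_le_of_rpow_le {M : ℝ → ℝ} {R₀ r s c : ℝ} (hM1 : ∀ r, R₀ ≤ r → 1 < M r)
    (hMsub : ∀ r, R₀ ≤ r → ∀ c : ℝ, 1 < c → c * log (M r) ≤ log (M (r ^ c)))
    (hr : 1 < r) (hR₀ : R₀ ≤ r) (hc : 1 < c) (hrs : r ^ c ≤ s) : M r ^ c ≤ M s := by
  have hs : 0 < s := (rpow_pos_of_pos (by linarith) c).trans_le hrs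
  have hcs : c ≤ logb r s := (le_logb_iff_rpow_le hr hs).2 hrs
  have hMr := hM1 r hR₀
  have hMs := hM1 s (hR₀.trans ((self_le_rpow_of_one_le hr.le hc.le).trans hrs))
  have hlog := hMsub r hR₀ _ (hc.trans_le hcs)
  rw [rpow_logb (by linarith) hr.ne' hs] at hlog
  rw [← log_le_log_iff (by positivity) (by linarith), log_rpow (by linarith)]
  exact (mul_le_mul_of_nonneg_right hcs (log_nonneg hMr.le)).trans hlog

theorem tendsto_atTop_of_rpow_le {M : ℝ → ℝ} {R₀ : ℝ} (hM1 : ∀ r, R₀ ≤ r → 1 < M r)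
    (hMsub : ∀ r, R₀ ≤ r → ∀ c : ℝ, 1 < c → c * log (M r) ≤ log (M (r ^ c))) :
    Tendsto M atTop atTop := by
  have hr₀ : 1 < max R₀ 2 := lt_max_of_lt_right one_lt_two
  refine tendsto_atTop_atTop.2 fun b => ?_
  have hpow := tendsto_rpow_atTop_of_base_gt_one _ (hM1 _ (le_max_left R₀ 2))
  obtain ⟨c, hcb, hc⟩ := ((hpow.eventually_ge_atTop b).and (eventually_gt_atTop 1)).exists
  exact ⟨max R₀ 2 ^ c,
    fun s hs => hcb.trans (rpow_le_of_rpow_le hM1 hMsub hr₀ (le_max_left _ _) hc hs)⟩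

/-- If `L ≤ -e` everywhere, `log L = log |L|` would be `≥ 1` and nonincreasing, which the
regularity inequality forbids. -/
theorem exists_neg_exp_one_lt_of_log_regular {L : ℝ → ℝ} {R k e : ℝ} (hk : 1 < k) (he : e ≤ 1)
    (hL : Monotone L) (hreg : ∀ r, R ≤ r → k * log (L r) ≤ log (L (r ^ k)) ^ e) :
    ∃ x, -exp 1 < L x := by
  by_contra! h
  set x := max R 1
  have hlog_neg : ∀ y, log (L y) = log (-L y) := fun y => (log_neg_eq_log _).symm
  have hLk := h (x ^ k)
  have hx : L x ≤ L (x ^ k) := hL (self_le_rpow_of_one_le (le_max_right _ _) hk.le)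
  have hpos : 0 < -L (x ^ k) := by linarith [exp_pos 1]
  have h1 : 1 ≤ log (L (x ^ k)) := by
    rw [hlog_neg, le_log_iff_exp_le hpos]; linarith
  have h2 : log (L (x ^ k)) ≤ log (L x) := by
    rw [hlog_neg, hlog_neg]; exact log_le_log hpos (by linarith)
  have h3 := (hreg x (le_max_left _ _)).trans (rpow_le_self_of_one_le h1 he)
  nlinarith

theorem eventually_exp_one_le_of_le_comp {M L N : ℝ → ℝ} {R₂ ν x : ℝ} (hν : 0 < ν)
    (hM : Tendsto M atTop atTop) (hL : Monotone L) (hx : -exp 1 < L x)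
    (hcomp : ∀ s, R₂ ≤ s → L (M s) ≤ N (ν * s)) (hN : ∀ᶠ r in atTop, 1 ≤ log (N r)) :
    ∀ᶠ r in atTop, exp 1 ≤ N r := by
  have hdiv : Tendsto (fun r => r / ν) atTop atTop := tendsto_id.atTop_div_const hν
  filter_upwards [hN, hdiv.eventually (hM.eventually_ge_atTop x), hdiv.eventually_ge_atTop R₂]
    with r hNr hxM hr
  have hLN := (hL hxM).trans (hcomp _ hr)
  rw [mul_div_cancel₀ _ hν.ne'] at hLN
  exact exp_one_le_of_one_le_log hNr (hx.trans_le hLN)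

theorem eventually_le_comp_rpow {M L N : ℝ → ℝ} {R₀ R₂ ν k k' : ℝ}
    (hM1 : ∀ r, R₀ ≤ r → 1 < M r)
    (hMsub : ∀ r, R₀ ≤ r → ∀ c : ℝ, 1 < c → c * log (M r) ≤ log (M (r ^ c)))
    (hL : Monotone L) (hcomp : ∀ s, R₂ ≤ s → L (M s) ≤ N (ν * s)) (hν : 0 < ν) (hk : 1 < k)
    (hkk' : k < k') : ∀ᶠ r in atTop, L (M r ^ k) ≤ N (r ^ k') := by
  filter_upwards [eventually_mul_rpow_le_rpow hkk' ν, eventually_ge_atTop (max (max R₀ R₂) 2)]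
    with r hνr hr
  simp only [max_le_iff] at hr
  obtain ⟨⟨hR₀, hR₂⟩, hr2⟩ := hr
  have hrs : r ^ k ≤ r ^ k' / ν := (le_div_iff₀' hν).2 hνr
  have hR₂s : R₂ ≤ r ^ k' / ν := hR₂.trans ((self_le_rpow_of_one_le (by linarith) hk.le).trans hrs)
  have hMk := rpow_le_of_rpow_le hM1 hMsub (by linarith) hR₀ hk hrs
  simpa only [mul_div_cancel₀ _ hν.ne'] using (hL hMk).trans (hcomp _ hR₂s)

/-- Strong log-regularity is preserved under composition: with `M = M(·,f₂)`,
`L = M(·,f₁)`, `N = M(·,f₁∘f₂)`, `ε = (2/3)ε′`, `ν = k^{1/2}`, `k′ = k^{3/2}`,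
the chain of inequalities yields `(log N(r^{k′}))^{ε′} ≥ k′ log N(r)` for large `r`. -/
theorem composition_strongly_log_regular
    (M L N : ℝ → ℝ) (R₀ R R₂ ε' k : ℝ)
    (hε'0 : 0 < ε') (hε'1 : ε' < 1) (hk : 1 < k)
    (hM1 : ∀ r, R₀ ≤ r → 1 < M r)
    (hMsub : ∀ r, R₀ ≤ r → ∀ c : ℝ, 1 < c →
      c * Real.log (M r) ≤ Real.log (M (r ^ c)))
    (hLmono : Monotone L)
    (hLreg : ∀ r, R ≤ r →
      k * Real.log (L r) ≤ (Real.log (L (r ^ k))) ^ (2 / 3 * ε'))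
    (hcomp : ∀ s, R₂ ≤ s →
      N s ≤ L (M s) ∧ L (M s) ≤ N (k ^ ((1 : ℝ) / 2) * s))
    (hN1 : ∃ R₃ : ℝ, ∀ r, R₃ ≤ r → 1 ≤ Real.log (N r)) :
    ∃ R' : ℝ, ∀ r, R' ≤ r →
      k ^ ((3 : ℝ) / 2) * Real.log (N r) ≤
        (Real.log (N (r ^ (k ^ ((3 : ℝ) / 2))))) ^ ε' := by
  have hν : 0 < k ^ ((1 : ℝ) / 2) := by positivity
  have hkk' : k < k ^ ((3 : ℝ) / 2) := by
    simpa using rpow_lt_rpow_of_exponent_lt hk (by norm_num : (1 : ℝ) < 3 / 2)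
  have hMtop := tendsto_atTop_of_rpow_le hM1 hMsub
  have hcomp₂ := fun s hs => (hcomp s hs).2
  obtain ⟨x, hx⟩ := exists_neg_exp_one_lt_of_log_regular hk (by linarith) hLmono hLreg
  refine eventually_atTop.1 ?_
  filter_upwards
    [eventually_exp_one_le_of_le_comp hν hMtop hLmono hx hcomp₂ (eventually_atTop.2 hN1),
    eventually_le_comp_rpow hM1 hMsub hLmono hcomp₂ hν hk hkk', hMtop.eventually_ge_atTop R,
    eventually_ge_atTop (max R₀ R₂)] with r hNr hLN hMr hr
  obtain ⟨hR₀, hR₂⟩ := max_le_iff.1 hr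
  have hN0 : 0 < N r := (exp_pos 1).trans_le hNr
  have hlogN : 1 ≤ log (N r) := (le_log_iff_exp_le hN0).2 hNr
  have hNL : N r ≤ L (M r) := (hcomp r hR₂).1
  have hLL : L (M r) ≤ L (M r ^ k) := hLmono (self_le_rpow_of_one_le (hM1 r hR₀).le hk.le)
  have hLk0 : 0 < L (M r ^ k) := hN0.trans_le (hNL.trans hLL)
  have hLk : 1 ≤ log (L (M r ^ k)) := hlogN.trans (log_le_log hN0 (hNL.trans hLL))
  have hlog : k * log (N r) ≤ log (N (r ^ k ^ ((3 : ℝ) / 2))) ^ (2 / 3 * ε') :=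
    calc k * log (N r) ≤ k * log (L (M r)) := by gcongr
      _ ≤ log (L (M r ^ k)) ^ (2 / 3 * ε') := hLreg _ hMr
      _ ≤ log (N (r ^ k ^ ((3 : ℝ) / 2))) ^ (2 / 3 * ε') :=
        rpow_le_rpow (by linarith) (log_le_log hLk0 hLN) (by positivity)
  have hNk : 0 ≤ log (N (r ^ k ^ ((3 : ℝ) / 2))) := by linarith [log_le_log hLk0 hLN]
  have h := rpow_mul_le_rpow_of_mul_le_rpow (p := 3 / 2) (by linarith) hlogN hNk (by norm_num) hlog
  rwa [show 2 / 3 * ε' * (3 / 2) = ε' by ring] at h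
end
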